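/- Let M be a maximal ancestral graph on a finite vertex set O and let T, V_a, V_b be distinct vertices such that the edge between T and V_a has an arrowhead at V_a, V_a and V_b are not adjacent, and there exists a set S ⊆ MMB(T) \ {V_b} with V_a ∉ S that m-separates T and V_b. Then there exists a set S' ⊆ MMB⁺(T) \ {V_a, V_b} that m-separates V_a and V_b. -/

import Mathlib

/-- A mixed graph on a vertex type `V`: each pair of distinct vertices carries at most
one edge, which is either directed (`dir a b` meaning `a → b`) or bidirected
(`bi a b` meaning `a ↔ b`). -/
structure MixedGraph (V : Type*) where
  /-- directed edge `a → b` -/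
  dir : V → V → Prop
  /-- bidirected edge `a ↔ b` -/
  bi : V → V → Prop
  bi_symm : ∀ a b, bi a b → bi b a
  dir_irrefl : ∀ a, ¬ dir a a
  bi_irrefl : ∀ a, ¬ bi a a
  not_dir_and_bi : ∀ a b, dir a b → ¬ bi a b
  not_dir_both : ∀ a b, dir a b → ¬ dir b a

namespace MixedGraph

variable {V : Type*} (G : MixedGraph V)

/-- `a` and `b` are adjacent: some edge joins them. -/
def Adj (a b : V) : Prop := G.dir a b ∨ G.dir b a ∨ G.bi a b

/-- There is an edge between `a` and `b` with an arrowhead at `b`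
(i.e. `a → b` or `a ↔ b`). -/
def HeadAt (a b : V) : Prop := G.dir a b ∨ G.bi a b

/-- `a` is an ancestor of `b` (equivalently `b` is a descendant of `a`):
`a = b` or there is a directed path from `a` to `b`. -/
def Anc : V → V → Prop := Relation.ReflTransGen G.dir

/-- A non-endpoint vertex `b` lying between `a` and `c` on a path is a collider if
both incident edges have an arrowhead at `b`. -/
def ColliderAt (a b c : V) : Prop := G.HeadAt a b ∧ G.HeadAt c b

/-- `p` is a path (a list of pairwise distinct, consecutively adjacent vertices)
from `x` to `y`. -/
def IsPath (p : List V) (x y : V) : Prop :=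
  p.Nodup ∧ p.head? = some x ∧ p.getLast? = some y ∧ p.Chain' G.Adj

/-- The path `p` from `x` to `y` is m-connecting relative to `Z`: every
non-collider on `p` is not in `Z` and every collider on `p` has a descendant in `Z`. -/
def MConnecting (Z : Set V) (p : List V) (x y : V) : Prop :=
  G.IsPath p x y ∧
    ∀ a b c : V, [a, b, c] <:+: p →
      (G.ColliderAt a b c → ∃ z ∈ Z, G.Anc b z) ∧
      (¬ G.ColliderAt a b c → b ∉ Z)

/-- `Z` m-separates `x` and `y` (with `x, y ∉ Z`): no path between `x` and `y` is
m-connecting relative to `Z`. -/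
def MSep (x y : V) (Z : Set V) : Prop :=
  x ∉ Z ∧ y ∉ Z ∧ ∀ p : List V, ¬ G.MConnecting Z p x y

/-- An inducing path between `x` and `y`: every non-endpoint vertex is a collider on
the path and is an ancestor of `x` or of `y`. -/
def IsInducingPath (p : List V) (x y : V) : Prop :=
  G.IsPath p x y ∧
    ∀ a b c : V, [a, b, c] <:+: p → G.ColliderAt a b c ∧ (G.Anc b x ∨ G.Anc b y)

/-- A collider path between `x` and `y`: a path with at least one non-endpoint
vertex, all of whose non-endpoint vertices are colliders. -/
def IsColliderPath (p : List V) (x y : V) : Prop :=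
  G.IsPath p x y ∧ 3 ≤ p.length ∧ ∀ a b c : V, [a, b, c] <:+: p → G.ColliderAt a b c

/-- `G` is ancestral: no directed cycle and no almost directed cycle. -/
def Ancestral : Prop :=
  (∀ a b, G.dir a b → ¬ G.Anc b a) ∧ (∀ a b, G.bi a b → ¬ G.Anc a b)

/-- `G` is a maximal ancestral graph: ancestral, and any two non-adjacent vertices
have no inducing path between them. -/
def IsMAG : Prop :=
  G.Ancestral ∧ ∀ x y : V, x ≠ y → ¬ G.Adj x y → ∀ p : List V, ¬ G.IsInducingPath p x y

/-- The MAG Markov blanket of `T`: all `X ≠ T` such that `T` and `X` are not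
m-separated by `O \ {T, X}`. -/
def MMB (T : V) : Set V :=
  {X | X ≠ T ∧ ¬ G.MSep T X (Set.univ \ {T, X})}

/-- `MMB⁺(T) = MMB(T) ∪ {T}`. -/
def MMBplus (T : V) : Set V := G.MMB T ∪ {T}

/-- The induced subgraph of `G` on a set `s` of vertices, keeping all edges of `G`
between vertices of `s`. -/
def induce (s : Set V) : MixedGraph s where
  dir a b := G.dir a b
  bi a b := G.bi a b
  bi_symm a b h := G.bi_symm a b h
  dir_irrefl a := G.dir_irrefl a
  bi_irrefl a := G.bi_irrefl a
  not_dir_and_bi a b h := G.not_dir_and_bi a b h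
  not_dir_both a b h := G.not_dir_both a b h

end MixedGraph


namespace ListTrip

lemma trip_cons {α : Type*} {x a b c : α} {l : List α} (h : [a,b,c] <:+: x :: l) :
    (x = a ∧ ∃ t, l = b :: c :: t) ∨ [a,b,c] <:+: l := by
  obtain ⟨s, t, hs⟩ := h
  cases s with
  | nil =>
    simp only [List.nil_append, List.cons_append, List.cons.injEq] at hs
    exact Or.inl ⟨hs.1.symm, t, by simp [hs.2]⟩
  | cons y s' =>
    simp only [List.cons_append, List.cons.injEq] at hs
    exact Or.inr ⟨s', t, hs.2⟩

lemma trip_append {α : Type*} {a b c : α} {X Y : List α} (h : [a,b,c] <:+: X ++ Y) :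
    [a,b,c] <:+: X ∨ [a,b,c] <:+: Y ∨
      (∃ X₀, X = X₀ ++ [a, b] ∧ ∃ Y₀, Y = c :: Y₀) ∨
      (∃ X₀, X = X₀ ++ [a] ∧ ∃ Y₀, Y = b :: c :: Y₀) := by
  induction X generalizing a b c with
  | nil => exact Or.inr (Or.inl (by simpa using h))
  | cons x X' ih =>
    rcases trip_cons (by simpa using h) with ⟨rfl, t, ht⟩ | h2
    · cases X' with
      | nil =>
        simp only [List.nil_append] at ht
        exact Or.inr (Or.inr (Or.inr ⟨[], by simp, t, ht⟩))
      | cons u X'' =>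
        simp only [List.cons_append, List.cons.injEq] at ht
        obtain ⟨rfl, ht⟩ := ht
        cases X'' with
        | nil =>
          simp only [List.nil_append] at ht
          exact Or.inr (Or.inr (Or.inl ⟨[], by simp, t, ht⟩))
        | cons v X''' =>
          simp only [List.cons_append, List.cons.injEq] at ht
          obtain ⟨rfl, _⟩ := ht
          exact Or.inl ⟨[], X''', by simp⟩
    · rcases ih h2 with h3 | h3 | ⟨X₀, hX, hY⟩ | ⟨X₀, hX, hY⟩
      · exact Or.inl (h3.trans (List.infix_cons (List.infix_refl _)))
      · exact Or.inr (Or.inl h3)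
      · exact Or.inr (Or.inr (Or.inl ⟨x :: X₀, by simp [hX], hY⟩))
      · exact Or.inr (Or.inr (Or.inr ⟨x :: X₀, by simp [hX], hY⟩))

end ListTrip

namespace MixedGraph

variable {V : Type*} {G : MixedGraph V} {Z S : Set V}

lemma adj_of_dir {a b : V} (h : G.dir a b) : G.Adj a b := Or.inl h

lemma adj_symm {a b : V} (h : G.Adj a b) : G.Adj b a := by
  rcases h with h | h | h
  · exact Or.inr (Or.inl h)
  · exact Or.inl h
  · exact Or.inr (Or.inr (G.bi_symm _ _ h))

lemma not_adj_self (a : V) : ¬ G.Adj a a := by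
  rintro (h | h | h)
  · exact G.dir_irrefl a h
  · exact G.dir_irrefl a h
  · exact G.bi_irrefl a h

lemma adj_of_headAt {a b : V} (h : G.HeadAt a b) : G.Adj a b := by
  rcases h with h | h
  · exact Or.inl h
  · exact Or.inr (Or.inr h)

lemma not_headAt_of_dir {a b : V} (h : G.dir a b) : ¬ G.HeadAt b a := by
  rintro (h' | h')
  · exact G.not_dir_both a b h h'
  · exact G.not_dir_and_bi a b h (G.bi_symm _ _ h')

lemma headAt_or_dir {b c : V} (h : G.Adj b c) : G.HeadAt c b ∨ G.dir b c := by
  rcases h with h | h | h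
  · exact Or.inr h
  · exact Or.inl (Or.inl h)
  · exact Or.inl (Or.inr (G.bi_symm _ _ h))

lemma anc_refl (a : V) : G.Anc a a := Relation.ReflTransGen.refl
lemma anc_of_dir {a b : V} (h : G.dir a b) : G.Anc a b := Relation.ReflTransGen.single h

lemma anc_antisymm (hG : G.Ancestral) {a b : V} (hab : G.Anc a b) (hba : G.Anc b a) : a = b := by
  rcases Relation.ReflTransGen.cases_head hab with rfl | ⟨m, ham, hmb⟩
  · rfl
  · exact absurd (hmb.trans hba) (hG.1 a m ham)

lemma anc_of_chain_mem : ∀ (l : List V) (a x : V), l.head? = some a → x ∈ l →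
    l.Chain' G.dir → G.Anc a x := by
  intro l
  induction l with
  | nil => intro a x h; simp at h
  | cons hd t ih =>
    intro a x hh hx hch
    have hda : hd = a := by simpa using hh
    subst hda
    rcases List.mem_cons.1 hx with rfl | hx
    · exact anc_refl _
    · rcases t with _ | ⟨r, t'⟩
      · simp at hx
      · have hdd : G.dir hd r := (List.isChain_cons_cons.1 hch).1
        exact (anc_of_dir hdd).trans (ih r x rfl hx (List.isChain_cons_cons.1 hch).2)

lemma exists_dir_chain {a b : V} (h : G.Anc a b) :
    ∃ l : List V, (a :: l).Chain' G.dir ∧ (a :: l).getLast? = some b ∧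
      ∀ x ∈ a :: l, G.Anc a x := by
  induction h with
  | refl => exact ⟨[], by simp [List.Chain'], by simp, by simp [anc_refl]⟩
  | tail h1 h2 ih =>
    rename_i m c
    obtain ⟨l, hch, hlast, hmem⟩ := ih
    refine ⟨l ++ [c], ?_, ?_, ?_⟩
    · have e : a :: (l ++ [c]) = (a :: l) ++ [c] := by simp
      rw [e]
      refine List.isChain_append.2 ⟨hch, by simp, ?_⟩
      intro x hx y hy
      simp only [List.head?_cons, Option.mem_def, Option.some.injEq] at hy
      subst hy
      rw [hlast] at hx
      simp only [Option.mem_def, Option.some.injEq] at hx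
      subst hx
      exact h2
    · have e : a :: (l ++ [c]) = (a :: l) ++ [c] := by simp
      rw [e, List.getLast?_concat]
    · intro x hx
      have e : a :: (l ++ [c]) = (a :: l) ++ [c] := by simp
      rw [e, List.mem_append] at hx
      rcases hx with hx | hx
      · exact hmem x hx
      · simp only [List.mem_singleton] at hx
        subst hx
        exact h1.tail h2

/-- The triple-compliance component of `MConnecting`. -/
def Compliant (G : MixedGraph V) (Z : Set V) (p : List V) : Prop :=
  ∀ a b c : V, [a, b, c] <:+: p →
    (G.ColliderAt a b c → ∃ z ∈ Z, G.Anc b z) ∧ (¬ G.ColliderAt a b c → b ∉ Z)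

lemma collider_symm {a b c : V} (h : G.ColliderAt a b c) : G.ColliderAt c b a := ⟨h.2, h.1⟩

lemma compliant_of_infix {p q : List V} (h : G.Compliant Z p) (hq : q <:+: p) :
    G.Compliant Z q := fun a b c ht => h a b c (ht.trans hq)

lemma compliant_cons {x : V} {l : List V} (h : G.Compliant Z l)
    (hx : ∀ b c t, l = b :: c :: t →
      (G.ColliderAt x b c → ∃ z ∈ Z, G.Anc b z) ∧ (¬ G.ColliderAt x b c → b ∉ Z)) :
    G.Compliant Z (x :: l) := by
  intro a b c ht
  rcases ListTrip.trip_cons ht with ⟨rfl, t, hl⟩ | ht'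
  · exact hx b c t hl
  · exact h a b c ht'

lemma trip_reverse {p : List V} {a b c : V} :
    [a,b,c] <:+: p.reverse ↔ [c,b,a] <:+: p := by
  constructor
  · intro h
    have := (List.reverse_infix (l₁ := [c,b,a]) (l₂ := p)).1 ?_
    · exact this
    · simpa using h
  · intro h
    have := (List.reverse_infix (l₁ := [c,b,a])).2 h
    simpa using this

lemma compliant_reverse {p : List V} (h : G.Compliant Z p) : G.Compliant Z p.reverse := by
  intro a b c ht
  have h2 := h c b a (trip_reverse.1 ht)
  exact ⟨fun hc => h2.1 (collider_symm hc), fun hc => h2.2 (fun hc' => hc (collider_symm hc'))⟩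

lemma adj_of_trip {p : List V} {a b c : V} (hch : p.Chain' G.Adj) (h : [a,b,c] <:+: p) :
    G.Adj a b ∧ G.Adj b c := by
  have h3 := hch.infix h
  exact ⟨(List.isChain_cons_cons.1 h3).1, (List.isChain_pair.1 (List.isChain_cons_cons.1 h3).2)⟩

lemma trip_ne_head {p : List V} {x a b c : V} (hnd : p.Nodup) (hh : p.head? = some x)
    (h : [a,b,c] <:+: p) : b ≠ x := by
  obtain ⟨s, t, hst⟩ := h
  cases s with
  | nil =>
    simp only [List.nil_append] at hst
    subst hst
    have hax : a = x := by simpa using hh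
    subst hax
    have : a ∉ [b, c] ++ t := (List.nodup_cons.1 (by simpa using hnd)).1
    intro hbx
    subst hbx
    exact this (by simp)
  | cons y s' =>
    subst hst
    have hyx : y = x := by simpa using hh
    subst hyx
    have : y ∉ s' ++ [a,b,c] ++ t := (List.nodup_cons.1 (by simpa using hnd)).1
    intro hbx
    subst hbx
    exact this (by simp)

lemma trip_ne_last {p : List V} {x a b c : V} (hnd : p.Nodup) (hl : p.getLast? = some x)
    (h : [a,b,c] <:+: p) : b ≠ x := by
  obtain ⟨s, t, hst⟩ := h
  have hre : p = (s ++ [a, b]) ++ (c :: t) := by simp [← hst]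
  have hx : x ∈ c :: t := by
    rw [hre, List.getLast?_append] at hl
    have hne : (c :: t).getLast? = some ((c :: t).getLast (by simp)) :=
      List.getLast?_eq_getLast (by simp)
    rw [hne] at hl
    have hl2 : some ((c :: t).getLast (by simp)) = some x := hl
    have hl3 := Option.some.inj hl2
    rw [← hl3]
    exact List.getLast_mem _
  have hnd' := hre ▸ hnd
  have hdisj := (List.nodup_append.1 hnd').2.2
  intro hbx
  exact hdisj x (by simp [hbx] : x ∈ s ++ [a,b]) x hx rfl

lemma chase {p : List V} (hG : G.Ancestral) (hch : p.Chain' G.Adj) (hcomp : G.Compliant Z p) :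
    ∀ (t s : List V) (u w : V), p = s ++ u :: w :: t → G.dir u w →
      (∃ z ∈ Z, G.Anc w z) ∨ (w :: t).Chain' G.dir := by
  intro t
  induction t with
  | nil => intro s u w _ _; exact Or.inr (by simp [List.Chain'])
  | cons v t' ih =>
    intro s u w hp hd
    have htrip : [u, w, v] <:+: p := ⟨s, t', by simp [hp]⟩
    by_cases hcol : G.ColliderAt u w v
    · exact Or.inl ((hcomp u w v htrip).1 hcol)
    · have hadj : G.Adj w v := (adj_of_trip hch htrip).2
      have hdwv : G.dir w v := by
        rcases headAt_or_dir hadj with hh | hh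
        · exact absurd ⟨Or.inl hd, hh⟩ hcol
        · exact hh
      rcases ih (s ++ [u]) w v (by simp [hp]) hdwv with hl | hr
      · obtain ⟨z, hz, hanc⟩ := hl
        exact Or.inl ⟨z, hz, (anc_of_dir hdwv).trans hanc⟩
      · exact Or.inr (List.isChain_cons_cons.2 ⟨hdwv, hr⟩)

lemma exists_dup_split {α : Type*} {p : List α} (h : ¬ p.Nodup) :
    ∃ (A : List α) (v : α) (B C : List α), p = A ++ v :: B ++ v :: C := by
  induction p with
  | nil => exact absurd List.nodup_nil h
  | cons x xs ih =>
    by_cases hx : x ∈ xs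
    · obtain ⟨s, t, hst⟩ := List.append_of_mem hx
      exact ⟨[], x, s, t, by simp [hst]⟩
    · have hxs : ¬ xs.Nodup := fun hn => h (List.nodup_cons.2 ⟨hx, hn⟩)
      obtain ⟨A, v, B, C, hABC⟩ := ih hxs
      exact ⟨x :: A, v, B, C, by simp [hABC]⟩

lemma walk_to_path (hG : G.Ancestral) :
    ∀ (n : ℕ) (p : List V) (x y : V), p.length ≤ n → p.Chain' G.Adj →
      p.head? = some x → p.getLast? = some y → G.Compliant Z p →
      ∃ q : List V, G.IsPath q x y ∧ G.Compliant Z q := by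
  intro n
  induction n with
  | zero =>
    intro p x y hlen _ hh _ _
    have : p = [] := List.length_eq_zero_iff.1 (Nat.le_zero.1 hlen)
    subst this
    simp at hh
  | succ n ih =>
    intro p x y hlen hch hh hl hcomp
    by_cases hnd : p.Nodup
    · exact ⟨p, ⟨hnd, hh, hl, hch⟩, hcomp⟩
    obtain ⟨A, v, B, C, rfl⟩ := exists_dup_split hnd
    have hBne : B ≠ [] := by
      rintro rfl
      have hvv : G.Adj v v := by
        have e : A ++ v :: [] ++ v :: C = A ++ (v :: v :: C) := by simp
        rw [e] at hch
        exact (List.isChain_cons_cons.1 (List.isChain_append.1 hch).2.1).1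
      exact not_adj_self v hvv
    obtain ⟨B', b₁, hB⟩ : ∃ B₀ b₁, B = b₁ :: B₀ := by
      cases B with
      | nil => exact absurd rfl hBne
      | cons b₁ B₀ => exact ⟨B₀, b₁, rfl⟩
    obtain ⟨B₀, b₂, hB2⟩ : ∃ B₀ b₂, B = B₀ ++ [b₂] := by
      rcases List.eq_nil_or_concat B with h | ⟨l, a, h⟩
      · exact absurd h hBne
      · exact ⟨l, a, by simpa using h⟩
    -- the shortened walk
    have hlen' : (A ++ v :: C).length ≤ n := by
      have h1 : (A ++ v :: B ++ v :: C).length ≤ n + 1 := hlen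
      simp only [List.length_append, List.length_cons] at h1 ⊢
      omega
    have hch' : (A ++ v :: C).Chain' G.Adj := by
      refine List.isChain_append.2 ⟨?_, ?_, ?_⟩
      · exact (List.isChain_append.1 (by simpa [List.Chain'] using hch)).1
      · have e : A ++ v :: B ++ v :: C = (A ++ v :: B) ++ (v :: C) := by simp
        rw [e] at hch
        exact (List.isChain_append.1 hch).2.1
      · intro a ha y' hy'
        have e : A ++ v :: B ++ v :: C = A ++ (v :: (B ++ v :: C)) := by simp
        rw [e] at hch
        have := (List.isChain_append.1 hch).2.2 a ha y' ?_
        · exact this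
        · simpa using hy'
    have hh' : (A ++ v :: C).head? = some x := by
      rw [List.head?_append]
      rw [show A ++ v :: B ++ v :: C = A ++ (v :: (B ++ v :: C)) by simp, List.head?_append] at hh
      cases hA : A.head? with
      | none => rw [hA] at hh; simpa using hh
      | some a => rw [hA] at hh; simpa using hh
    have hl' : (A ++ v :: C).getLast? = some y := by
      rw [show A ++ v :: B ++ v :: C = (A ++ v :: B) ++ (v :: C) by simp, List.getLast?_append] at hl
      rw [List.getLast?_append]
      rw [List.getLast?_eq_getLast (l := v :: C) (by simp)] at hl ⊢
      exact hl
    have hcomp' : G.Compliant Z (A ++ v :: C) := by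
      have hXp : (A ++ [v]) <+: (A ++ v :: B ++ v :: C) :=
        ⟨B ++ v :: C, by simp⟩
      have hYs : (v :: C) <:+ (A ++ v :: B ++ v :: C) := ⟨A ++ v :: B, by simp⟩
      intro a b c ht
      have ht2 : [a,b,c] <:+: (A ++ [v]) ++ C := by
        have e : (A ++ [v]) ++ C = A ++ v :: C := by simp
        rw [e]; exact ht
      rcases ListTrip.trip_append ht2 with h3 | h3 | ⟨X₀, hX, Y₀, hY⟩ | ⟨X₀, hX, Y₀, hY⟩
      · exact hcomp a b c (h3.trans hXp.isInfix)
      · exact hcomp a b c (h3.trans ((List.suffix_cons v C).trans hYs).isInfix)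
      · -- junction triple: b = v, A = X₀ ++ [a], C = c :: Y₀
        have hbv : b = v := by
          have h4 := congrArg (fun l => l.getLast?) hX
          rw [show X₀ ++ [a, b] = (X₀ ++ [a]) ++ [b] by simp, List.getLast?_concat,
            List.getLast?_concat] at h4
          exact (Option.some.inj h4.symm)
        subst hbv
        have hA : A = X₀ ++ [a] := by
          have h4 := congrArg List.dropLast hX
          rw [show X₀ ++ [a, b] = (X₀ ++ [a]) ++ [b] by simp] at h4
          simpa [List.dropLast_concat] using h4
        have htrip1 : [a, b, b₁] <:+: A ++ b :: B ++ b :: C :=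
          ⟨X₀, B' ++ b :: C, by simp [hA, hB]⟩
        have htrip2 : [b₂, b, c] <:+: A ++ b :: B ++ b :: C :=
          ⟨A ++ b :: B₀, Y₀, by simp [hB2, hY]⟩
        by_cases hv : b ∈ Z
        · have hav : G.HeadAt a b := by
            by_contra hav
            exact (hcomp a b b₁ htrip1).2 (fun hcl => hav hcl.1) hv
          have hcv : G.HeadAt c b := by
            by_contra hcv
            exact (hcomp b₂ b c htrip2).2 (fun hcl => hcv hcl.2) hv
          exact ⟨fun _ => ⟨b, hv, anc_refl b⟩, fun hnc => absurd ⟨hav, hcv⟩ hnc⟩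
        · refine ⟨?_, fun _ => hv⟩
          intro hcol
          by_cases h1 : G.ColliderAt a b b₁
          · exact (hcomp a b b₁ htrip1).1 h1
          · have hd1 : G.dir b b₁ := by
              have hadj : G.Adj b b₁ := (adj_of_trip hch htrip1).2
              rcases headAt_or_dir hadj with hh1 | hh1
              · exact absurd ⟨hcol.1, hh1⟩ h1
              · exact hh1
            have hcs := chase hG hch hcomp (B' ++ b :: C) (X₀ ++ [a]) b b₁
              (by simp [hA, hB]) hd1
            rcases hcs with ⟨z, hz, hanc⟩ | hchain
            · exact ⟨z, hz, (anc_of_dir hd1).trans hanc⟩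
            · have hmem : b ∈ b₁ :: (B' ++ b :: C) := by simp
              have hanc := anc_of_chain_mem (b₁ :: (B' ++ b :: C)) b₁ b rfl hmem hchain
              exact absurd hanc (hG.1 b b₁ hd1)
      · -- a = v, triple inside v :: C
        have hav : a = v := by
          have h4 := congrArg (fun l => l.getLast?) hX
          simp only [List.getLast?_concat] at h4
          exact (Option.some.inj h4.symm)
        subst hav
        have h5 : [a, b, c] <:+: a :: C := by
          rw [hY]
          exact ⟨[], Y₀, by simp⟩
        exact hcomp a b c (h5.trans hYs.isInfix)
    exact ih (A ++ v :: C) x y hlen' hch' hh' hl' hcomp'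

lemma compliant_of_dir_chain {l : List V} (hch : l.Chain' G.dir) (hmem : ∀ x ∈ l, x ∉ S) :
    G.Compliant S l := by
  intro a b c ht
  have hbc : G.dir b c := by
    have h3 := hch.infix ht
    exact List.isChain_pair.1 (List.isChain_cons_cons.1 h3).2
  have hnc : ¬ G.ColliderAt a b c := fun hcl => not_headAt_of_dir hbc hcl.2
  refine ⟨fun hcl => absurd hcl hnc, fun _ => hmem b ?_⟩
  obtain ⟨u₁, u₂, hu⟩ := ht
  rw [← hu]
  simp

lemma mem_MMB_of_collider_path {T x : V} {cp : List V} (hnd : cp.Nodup)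
    (hh : cp.head? = some T) (hl : cp.getLast? = some x) (hch : cp.Chain' G.Adj)
    (hne : x ≠ T) (hcoll : ∀ a b c, [a,b,c] <:+: cp → G.ColliderAt a b c) :
    x ∈ G.MMB T := by
  refine ⟨hne, fun hsep => ?_⟩
  refine hsep.2.2 cp ⟨⟨hnd, hh, hl, hch⟩, ?_⟩
  intro a b c ht
  refine ⟨fun _ => ⟨b, ?_, anc_refl b⟩, fun hnc => absurd (hcoll a b c ht) hnc⟩
  refine ⟨trivial, ?_⟩
  intro hb
  rcases hb with hb | hb
  · exact trip_ne_head hnd hh ht hb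
  · exact trip_ne_last hnd hl ht hb

end MixedGraph

open MixedGraph

/-- if the edge between `T` and `V_a` has an arrowhead at `V_a`, `V_a`
and `V_b` are not adjacent, and some `S ⊆ MMB(T) \ {V_b}` with `V_a ∉ S`
m-separates `T` and `V_b`, then some `S' ⊆ MMB⁺(T) \ {V_a, V_b}` m-separates
`V_a` and `V_b`. -/
theorem msep_spouse_pair_within_mmbplus {V : Type*} [Fintype V]
    (G : MixedGraph V) (hG : G.IsMAG) (T va vb : V)
    (hTa : T ≠ va) (hTb : T ≠ vb) (hab : va ≠ vb)
    (hhead : G.HeadAt T va) (hnadj : ¬ G.Adj va vb)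
    (hS : ∃ S : Set V, S ⊆ G.MMB T \ {vb} ∧ va ∉ S ∧ G.MSep T vb S) :
    ∃ S' : Set V, S' ⊆ G.MMBplus T \ {va, vb} ∧ G.MSep va vb S' := by
  classical
  obtain ⟨S, hSsub, hvaS, hTS, hvbS, hblock⟩ := hS
  set S' : Set V := {v | (G.Anc v va ∨ G.Anc v vb) ∧ v ≠ va ∧ v ≠ vb ∧ v ∈ G.MMBplus T}
    with hS'def
  refine ⟨S', ?_, fun h => h.2.1 rfl, fun h => h.2.2.1 rfl, ?_⟩
  · intro v hv
    refine ⟨hv.2.2.2, ?_⟩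
    intro hmem
    rcases hmem with h | h
    · exact hv.2.1 h
    · exact hv.2.2.1 h
  intro p hp
  obtain ⟨⟨hnd, hhd, hlast, hchain⟩, hcompS'⟩ := hp
  have hcomp : G.Compliant S' p := hcompS'
  clear hcompS'
  obtain ⟨p₁, rfl⟩ : ∃ p₁, p = va :: p₁ := by
    cases p with
    | nil => simp at hhd
    | cons h t =>
      have : h = va := by simpa using hhd
      exact ⟨t, by rw [this]⟩
  obtain ⟨x₁, rest, rfl⟩ : ∃ x₁ rest, p₁ = x₁ :: rest := by
    cases p₁ with
    | nil => exact absurd (by simpa using hlast) hab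
    | cons x₁ rest => exact ⟨x₁, rest, rfl⟩
  have hadj2 : ∀ (s : List V) (w u : V) (t : List V),
      (va :: x₁ :: rest) = s ++ w :: u :: t → G.Adj w u :=
    fun s w u t h => List.isChain_pair.1 (hchain.infix ⟨s, t, by simp [h]⟩)
  have hcollA : ∀ a b c : V, [a,b,c] <:+: (va :: x₁ :: rest) → G.ColliderAt a b c →
      G.Anc b va ∨ G.Anc b vb := by
    intro a b c ht hcol
    obtain ⟨z, hz, hanc⟩ := (hcomp a b c ht).1 hcol
    exact hz.1.imp hanc.trans hanc.trans
  have hAncVert : ∀ a b c : V, [a,b,c] <:+: (va :: x₁ :: rest) →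
      G.Anc b va ∨ G.Anc b vb := by
    intro a b c ht
    by_cases hcol : G.ColliderAt a b c
    · exact hcollA a b c ht hcol
    obtain ⟨s, t, hst⟩ := ht
    have hpdec : va :: x₁ :: rest = s ++ a :: b :: c :: t := by simp [← hst]
    by_cases hha : G.HeadAt a b
    · have hdc : G.dir b c := by
        rcases headAt_or_dir (hadj2 (s ++ [a]) b c t (by simp [hpdec])) with h1 | h1
        · exact absurd ⟨hha, h1⟩ hcol
        · exact h1
      rcases chase hG.1 hchain hcomp t (s ++ [a]) b c (by simp [hpdec]) hdc with
        ⟨z, hz, hanc⟩ | hchn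
      · have hbz := (anc_of_dir hdc).trans hanc
        exact hz.1.imp hbz.trans hbz.trans
      · have hlast2 : (c :: t).getLast? = some vb := by
          rw [show va :: x₁ :: rest = (s ++ [a, b]) ++ (c :: t) by simp [hpdec]] at hlast
          rw [List.getLast?_append] at hlast
          rw [List.getLast?_eq_getLast (l := c :: t) (by simp)] at hlast ⊢
          exact hlast
        have hvbmem : vb ∈ c :: t := List.mem_of_mem_getLast? (by rw [hlast2]; rfl)
        exact Or.inr ((anc_of_dir hdc).trans (anc_of_chain_mem (c :: t) c vb rfl hvbmem hchn))
    · have hda : G.dir b a := by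
        rcases headAt_or_dir (adj_symm (hadj2 s a b (c :: t) (by simp [hpdec]))) with h1 | h1
        · exact absurd h1 hha
        · exact h1
      have hchainR : List.Chain' G.Adj (va :: x₁ :: rest).reverse := by
        rw [List.Chain', List.isChain_reverse]
        exact hchain.imp (fun x y h => adj_symm h)
      have hcompR := compliant_reverse hcomp
      rcases chase hG.1 hchainR hcompR s.reverse (t.reverse ++ [c]) b a
          (by rw [hpdec]; simp) hda with ⟨z, hz, hanc⟩ | hchn
      · have hbz := (anc_of_dir hda).trans hanc
        exact hz.1.imp hbz.trans hbz.trans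
      · have hlast2 : (a :: s.reverse).getLast? = some va := by
          have hrl : (va :: x₁ :: rest).reverse.getLast? = some va := by
            rw [List.getLast?_reverse]; exact hhd
          rw [show (va :: x₁ :: rest).reverse = (t.reverse ++ [c, b]) ++ (a :: s.reverse) by
            rw [hpdec]; simp] at hrl
          rw [List.getLast?_append] at hrl
          rw [List.getLast?_eq_getLast (l := a :: s.reverse) (by simp)] at hrl ⊢
          exact hrl
        have hvamem : va ∈ a :: s.reverse := List.mem_of_mem_getLast? (by rw [hlast2]; rfl)
        exact Or.inl ((anc_of_dir hda).trans (anc_of_chain_mem (a :: s.reverse) a va rfl hvamem hchn))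
  have hNC : ∀ a b c : V, [a,b,c] <:+: (va :: x₁ :: rest) → ¬ G.ColliderAt a b c →
      b ∉ S ∧ b ≠ T := by
    intro a b c ht hncol
    have hbS' : b ∉ S' := (hcomp a b c ht).2 hncol
    have hbA := hAncVert a b c ht
    have hbva : b ≠ va := trip_ne_head hnd hhd ht
    have hbvb : b ≠ vb := trip_ne_last hnd hlast ht
    constructor
    · intro hbS
      exact hbS' ⟨hbA, hbva, hbvb, Or.inl (hSsub hbS).1⟩
    · rintro rfl
      exact hbS' ⟨hbA, hbva, hbvb, Or.inr rfl⟩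
  rcases headAt_or_dir (hadj2 [] va x₁ rest rfl) with hA1 | hd1
  · -- CASE A : arrowhead at va on the first edge
    by_cases hallcol : ∀ a b c : V, [a,b,c] <:+: (va :: x₁ :: rest) → G.ColliderAt a b c
    · exact hG.2 va vb hab hnadj _ ⟨⟨hnd, hhd, hlast, hchain⟩,
        fun a b c ht => ⟨hallcol a b c ht, hAncVert a b c ht⟩⟩
    · push_neg at hallcol
      obtain ⟨a₀, b₀, c₀, ht₀, hnc₀⟩ := hallcol
      have hPex : ∃ n, ∃ s a b c t, (va :: x₁ :: rest) = s ++ a :: b :: c :: t ∧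
          s.length = n ∧ ¬ G.ColliderAt a b c := by
        obtain ⟨s, t, hst⟩ := ht₀
        exact ⟨s.length, s, a₀, b₀, c₀, t, by simp [← hst], rfl, hnc₀⟩
      obtain ⟨s, a, b, c, t, hdec, hslen, hncol⟩ := Nat.find_spec hPex
      have hcolmin : ∀ (s' : List V) (a' b' c' : V) (t' : List V),
          (va :: x₁ :: rest) = s' ++ a' :: b' :: c' :: t' → s'.length < Nat.find hPex →
          G.ColliderAt a' b' c' := by
        intro s' a' b' c' t' hdec' hlt
        by_contra hnc'
        exact Nat.find_min hPex hlt ⟨s', a', b', c', t', hdec', rfl, hnc'⟩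
      have htb : [a,b,c] <:+: (va :: x₁ :: rest) := ⟨s, t, by simp [hdec]⟩
      have hbS' : b ∉ S' := (hcomp a b c htb).2 hncol
      have hbA := hAncVert a b c htb
      have hbva : b ≠ va := trip_ne_head hnd hhd htb
      have hbvb : b ≠ vb := trip_ne_last hnd hlast htb
      have hbT : b ≠ T := (hNC a b c htb hncol).2
      refine hbS' ⟨hbA, hbva, hbvb, Or.inl ?_⟩
      by_cases hT : T ∈ s ++ [a]
      · obtain ⟨s₁, s₂, hsplit⟩ := List.append_of_mem hT
        have hpdec2 : (va :: x₁ :: rest) = s₁ ++ (T :: (s₂ ++ [b])) ++ (c :: t) := by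
          rw [hdec, show s ++ a :: b :: c :: t = (s ++ [a]) ++ (b :: c :: t) by simp, hsplit]
          simp
        have hinf : (T :: (s₂ ++ [b])) <:+: (va :: x₁ :: rest) := ⟨s₁, c :: t, by rw [hpdec2]⟩
        apply mem_MMB_of_collider_path (hinf.sublist.nodup hnd) (by simp)
          (by rw [show T :: (s₂ ++ [b]) = (T :: s₂) ++ [b] by simp, List.getLast?_concat])
          (hchain.infix hinf) hbT
        intro α β γ htcp
        obtain ⟨u₁, u₂, hu⟩ := htcp
        have hlens : s₁.length + 1 + s₂.length = s.length + 1 := by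
          have h5 := congrArg List.length hsplit
          simp at h5
          omega
        have hlenu : u₁.length + 3 + u₂.length = s₂.length + 2 := by
          have h5 := congrArg List.length hu
          simp at h5
          omega
        refine hcolmin (s₁ ++ u₁) α β γ (u₂ ++ c :: t) ?_ ?_
        · rw [hpdec2, ← hu]; simp
        · rw [← hslen]
          simp only [List.length_append]
          omega
      · have hpdec2 : (va :: x₁ :: rest) = (s ++ [a, b]) ++ (c :: t) := by simp [hdec]
        have hprefnd : (s ++ [a, b]).Nodup := by
          have hpre : (s ++ [a, b]) <+: (va :: x₁ :: rest) := ⟨c :: t, by rw [← hpdec2]⟩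
          exact hpre.sublist.nodup hnd
        have hTnotin : T ∉ s ++ [a, b] := by
          intro hmem
          rw [show s ++ [a, b] = (s ++ [a]) ++ [b] by simp, List.mem_append] at hmem
          rcases hmem with h | h
          · exact hT h
          · exact hbT ((by simpa using h : T = b)).symm
        have hheadpref : (s ++ [a, b]).head? = some va := by
          cases s with
          | nil =>
            have ha' : va = a := by
              have h5 := congrArg List.head? hpdec2
              simpa using h5
            simp [ha'.symm]
          | cons y s' =>
            have hy' : va = y := by
              have h5 := congrArg List.head? hpdec2
              simpa using h5
            simp [hy'.symm]
        refine mem_MMB_of_collider_path (cp := T :: (s ++ [a, b]))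
          (List.nodup_cons.2 ⟨hTnotin, hprefnd⟩) (by simp)
          (by rw [show T :: (s ++ [a, b]) = (T :: s ++ [a]) ++ [b] by simp,
            List.getLast?_concat]) ?_ hbT ?_
        · refine List.isChain_cons.2 ⟨?_, ?_⟩
          · intro y hy
            rw [Option.mem_def, hheadpref] at hy
            have hyva : va = y := by simpa using hy
            rw [← hyva]
            exact adj_of_headAt hhead
          · exact hchain.infix (⟨[], c :: t, by rw [hpdec2]; simp⟩ :
              (s ++ [a, b]) <:+: (va :: x₁ :: rest))
        · intro α β γ htcp
          rcases ListTrip.trip_cons htcp with ⟨rfl, t₀, hl0⟩ | htcp'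
          · have hcomb : (β :: γ :: t₀) ++ (c :: t) = va :: x₁ :: rest := by
              rw [← hl0, ← hpdec2]
            have hβ : β = va := by
              have := congrArg List.head? hcomb
              simpa using this
            have hγ : γ = x₁ := by
              have := congrArg (fun l => l.head?.bind (fun _ => l.tail.head?)) hcomb
              simpa using this
            rw [hβ, hγ]
            exact ⟨hhead, hA1⟩
          · obtain ⟨u₁, u₂, hu⟩ := htcp'
            have hlenu : u₁.length + 3 + u₂.length = s.length + 2 := by
              have h5 := congrArg List.length hu
              simp at h5
              omega
            refine hcolmin u₁ α β γ (u₂ ++ c :: t) ?_ ?_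
            · rw [hpdec2, ← hu]; simp
            · rw [← hslen]; omega
  · -- CASE B : first edge directed out of va
    have hwalk : ∀ q : List V, q.Chain' G.Adj → q.head? = some T → q.getLast? = some vb →
        G.Compliant S q → False := by
      intro q hch hh hl hc
      obtain ⟨q', hq', hq'c⟩ := walk_to_path hG.1 q.length q T vb le_rfl hch hh hl hc
      exact hblock q' ⟨hq', hq'c⟩
    have dsplit : ∀ (t : List V) (s : List V) (w u : V),
        (va :: x₁ :: rest) = s ++ w :: u :: t → G.dir w u →
        ((u :: t).Chain' G.dir ∧ ∀ x ∈ u :: t, x ∉ S) ∨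
        (∃ t₁ c t₂, u :: t = t₁ ++ c :: t₂ ∧ (w :: (t₁ ++ [c])).Chain' G.dir ∧
          (∀ x ∈ t₁, x ∉ S) ∧ ∃ α γ, [α, c, γ] <:+: (va :: x₁ :: rest) ∧ G.ColliderAt α c γ) := by
      intro t
      induction t with
      | nil =>
        intro s w u hp hd
        left
        refine ⟨by simp [List.Chain'], ?_⟩
        intro x hx
        have hx' : x = u := by simpa using hx
        subst hx'
        have hxvb : x = vb := by
          rw [show va :: x₁ :: rest = (s ++ [w]) ++ [x] by simp [hp],
            List.getLast?_concat] at hlast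
          simpa using hlast
        rw [hxvb]; exact hvbS
      | cons v t' ih =>
        intro s w u hp hd
        have htrip : [w, u, v] <:+: (va :: x₁ :: rest) := ⟨s, t', by simp [hp]⟩
        by_cases hcol : G.ColliderAt w u v
        · right
          exact ⟨[], u, v :: t', by simp, List.isChain_pair.2 hd, by simp, w, v, htrip, hcol⟩
        · have hdu : G.dir u v := by
            rcases headAt_or_dir (hadj2 (s ++ [w]) u v t' (by simp [hp])) with h1 | h1
            · exact absurd ⟨Or.inl hd, h1⟩ hcol
            · exact h1
          have hunS : u ∉ S := (hNC w u v htrip hcol).1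
          rcases ih (s ++ [w]) u v (by simp [hp]) hdu with
            ⟨hch2, hmem2⟩ | ⟨t₁, c, t₂, heq, hch2, hmem2, hex⟩
          · left
            refine ⟨List.isChain_cons_cons.2 ⟨hdu, hch2⟩, ?_⟩
            intro x hx
            rcases List.mem_cons.1 hx with rfl | hx
            · exact hunS
            · exact hmem2 x hx
          · right
            refine ⟨u :: t₁, c, t₂, by simp [heq], ?_, ?_, hex⟩
            · exact List.isChain_cons_cons.2 ⟨hd, hch2⟩
            · intro x hx
              rcases List.mem_cons.1 hx with rfl | hx
              · exact hunS
              · exact hmem2 x hx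
    rcases dsplit rest [] va x₁ rfl hd1 with
      ⟨hchd, hmemS⟩ | ⟨t₁, c, t₂, heq, hchd, hmemS, α, γ, htc, hcolc⟩
    · -- (i) the whole path is a directed chain to vb
      refine hwalk (T :: va :: x₁ :: rest) ?_ (by simp) ?_ ?_
      · exact List.isChain_cons_cons.2 ⟨adj_of_headAt hhead, hchain⟩
      · rw [List.getLast?_cons_cons]
        exact hlast
      · refine compliant_cons (compliant_of_dir_chain (List.isChain_cons_cons.2 ⟨hd1, hchd⟩) ?_) ?_
        · intro x hx
          rcases List.mem_cons.1 hx with rfl | hx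
          · exact hvaS
          · exact hmemS x hx
        · intro b' c' t₀ hteq
          have hb' : va = b' := by
            have h5 := congrArg List.head? hteq
            simpa using h5
          subst hb'
          have hc' : x₁ = c' := by
            have h5 := congrArg List.tail hteq
            have h6 := congrArg List.head? h5
            simpa using h6
          subst hc'
          exact ⟨fun hcl => absurd hcl.2 (not_headAt_of_dir hd1), fun _ => hvaS⟩
    · -- first collider c along the initial directed segment
      have hAncvac : G.Anc va c := anc_of_chain_mem (va :: (t₁ ++ [c])) va c rfl (by simp) hchd
      have hcnva : c ≠ va := by
        intro hcv
        have hmem : va ∈ x₁ :: rest := by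
          rw [heq, ← hcv]
          simp
        exact (List.nodup_cons.1 hnd).1 hmem
      have hcA := hcollA α c γ htc hcolc
      by_cases hgood : ∃ z ∈ S, G.Anc c z
      · -- (iii) descendant of c in S : walk along p with detours
        obtain ⟨z₀, hz₀S, hz₀a⟩ := hgood
        have hVA : ∃ s₀ ∈ S, G.Anc va s₀ := ⟨z₀, hz₀S, hAncvac.trans hz₀a⟩
        have build : ∀ (t : List V) (w : V) (s : List V), (va :: x₁ :: rest) = s ++ w :: t →
            ∃ r : List V, r.head? = t.head? ∧ (w :: r).Chain' G.Adj ∧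
              (w :: r).getLast? = some vb ∧ G.Compliant S (w :: r) := by
          intro t
          induction t with
          | nil =>
            intro w s hp
            have hwvb : w = vb := by
              rw [show va :: x₁ :: rest = s ++ [w] by simp [hp], List.getLast?_concat] at hlast
              simpa using hlast
            refine ⟨[], rfl, by simp [List.Chain'], by simp [hwvb], ?_⟩
            intro a b c ht
            obtain ⟨u₁, u₂, hu⟩ := ht
            have := congrArg List.length hu
            simp at this
            omega
          | cons u t' ih =>
            intro w s hp
            have hadjwu : G.Adj w u := hadj2 s w u t' hp
            cases t' with
            | nil =>
              have huvb : u = vb := by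
                rw [show va :: x₁ :: rest = (s ++ [w]) ++ [u] by simp [hp],
                  List.getLast?_concat] at hlast
                simpa using hlast
              refine ⟨[u], rfl, List.isChain_pair.2 hadjwu, by simp [huvb], ?_⟩
              intro a b c ht
              obtain ⟨u₁, u₂, hu⟩ := ht
              have := congrArg List.length hu
              simp at this
              omega
            | cons v t'' =>
              have htrip : [w, u, v] <:+: (va :: x₁ :: rest) := ⟨s, t'', by simp [hp]⟩
              obtain ⟨r', hr'h, hr'ch, hr'l, hr'c⟩ := ih u (s ++ [w]) (by simp [hp])
              by_cases hcol : G.ColliderAt w u v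
              · by_cases hgu : ∃ z ∈ S, G.Anc u z
                · refine ⟨u :: r', rfl, List.isChain_cons_cons.2 ⟨hadjwu, hr'ch⟩,
                    by simpa using hr'l, ?_⟩
                  refine compliant_cons hr'c ?_
                  intro b' c' t₀ hr'eq
                  have hb' : u = b' := by
                    have h5 := congrArg List.head? hr'eq
                    simpa using h5
                  subst hb'
                  have hc' : c' = v := by
                    have h5 : r' = c' :: t₀ := by
                      have h6 := congrArg List.tail hr'eq
                      simpa using h6
                    rw [h5] at hr'h
                    exact (show v = c' by simpa using hr'h.symm).symm
                  subst hc'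
                  exact ⟨fun _ => hgu, fun hnc => absurd hcol hnc⟩
                · have hu_nS : ∀ x, G.Anc u x → x ∉ S := fun x hx hxS => hgu ⟨x, hxS, hx⟩
                  rcases hcollA w u v htrip hcol with hva2 | hvb2
                  · obtain ⟨s₀, hs₀, hvs₀⟩ := hVA
                    exact absurd ⟨s₀, hs₀, hva2.trans hvs₀⟩ hgu
                  · obtain ⟨d, hdch, hdl, hdmem⟩ := exists_dir_chain hvb2
                    refine ⟨u :: d, rfl, ?_, by simpa using hdl, ?_⟩
                    · exact List.isChain_cons_cons.2 ⟨hadjwu, hdch.imp (fun x y h => adj_of_dir h)⟩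
                    · refine compliant_cons (compliant_of_dir_chain hdch ?_) ?_
                      · intro x hx
                        exact hu_nS x (hdmem x hx)
                      · intro b' c' t₀ hdeq
                        have hb' : u = b' := by
                          have h5 := congrArg List.head? hdeq
                          simpa using h5
                        subst hb'
                        have hdd : d = c' :: t₀ := by
                          have h6 := congrArg List.tail hdeq
                          simpa using h6
                        have hduc : G.dir u c' := by
                          rw [hdd] at hdch
                          exact (List.isChain_cons_cons.1 hdch).1
                        exact ⟨fun hcl => absurd hcl.2 (not_headAt_of_dir hduc),
                          fun _ => hu_nS u (anc_refl u)⟩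
              · have hu_nS : u ∉ S := (hNC w u v htrip hcol).1
                refine ⟨u :: r', rfl, List.isChain_cons_cons.2 ⟨hadjwu, hr'ch⟩,
                  by simpa using hr'l, ?_⟩
                refine compliant_cons hr'c ?_
                intro b' c' t₀ hr'eq
                have hb' : u = b' := by
                  have h5 := congrArg List.head? hr'eq
                  simpa using h5
                subst hb'
                have hc' : c' = v := by
                  have h5 : r' = c' :: t₀ := by
                    have h6 := congrArg List.tail hr'eq
                    simpa using h6
                  rw [h5] at hr'h
                  exact (show v = c' by simpa using hr'h.symm).symm
                subst hc'
                exact ⟨fun hcl => absurd hcl hcol, fun _ => hu_nS⟩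
        obtain ⟨r, hrh, hrch, hrl, hrc⟩ := build (x₁ :: rest) va [] (by simp)
        refine hwalk (T :: va :: r) (List.isChain_cons_cons.2 ⟨adj_of_headAt hhead, hrch⟩)
          (by simp) (by rw [List.getLast?_cons_cons]; exact hrl) ?_
        refine compliant_cons hrc ?_
        intro b' c' t₀ hreq
        have hb' : va = b' := by
          have h5 := congrArg List.head? hreq
          simpa using h5
        subst hb'
        have hc' : c' = x₁ := by
          have h5 : r = c' :: t₀ := by
            have h6 := congrArg List.tail hreq
            simpa using h6
          rw [h5] at hrh
          exact (show x₁ = c' by simpa using hrh.symm).symm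
        subst hc'
        exact ⟨fun hcl => absurd hcl.2 (not_headAt_of_dir hd1), fun _ => hvaS⟩
      · -- (ii) no descendant of c in S : detour from c directly to vb
        rcases hcA with hcva | hcvb
        · exact absurd (anc_antisymm hG.1 hAncvac hcva) (Ne.symm hcnva)
        · have hc_nS : ∀ x, G.Anc c x → x ∉ S := fun x hx hxS => hgood ⟨x, hxS, hx⟩
          obtain ⟨d, hdch, hdl, hdmem⟩ := exists_dir_chain hcvb
          have h6 : ((va :: t₁) ++ [c]).Chain' G.dir := by simpa using hchd
          have h7 := List.isChain_append.1 h6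
          have hLch : ((va :: t₁) ++ (c :: d)).Chain' G.dir := by
            refine List.isChain_append.2 ⟨h7.1, hdch, ?_⟩
            intro x hx y hy
            have hyc : c = y := by simpa using hy
            rw [← hyc]
            exact h7.2.2 x hx c (by simp)
          have hLmem : ∀ x ∈ (va :: t₁) ++ (c :: d), x ∉ S := by
            intro x hx
            rcases List.mem_append.1 hx with hx | hx
            · rcases List.mem_cons.1 hx with rfl | hx
              · exact hvaS
              · exact hmemS x hx
            · exact hc_nS x (anc_of_chain_mem (c :: d) c x rfl hx hdch)
          refine hwalk (T :: ((va :: t₁) ++ (c :: d))) ?_ (by simp) ?_ ?_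
          · exact List.isChain_cons_cons.2 ⟨adj_of_headAt hhead, hLch.imp (fun x y h => adj_of_dir h)⟩
          · rw [show T :: ((va :: t₁) ++ (c :: d)) = (T :: va :: t₁) ++ (c :: d) by simp,
              List.getLast?_append]
            rw [List.getLast?_eq_getLast (l := c :: d) (by simp)] at hdl ⊢
            rw [hdl]
            rfl
          · refine compliant_cons (compliant_of_dir_chain hLch hLmem) ?_
            intro b' c' t₀ hteq
            have hb' : va = b' := by
              have h5 := congrArg List.head? hteq
              simpa using h5
            subst hb'
            have hdir1 : G.dir va c' := by
              rw [hteq] at hLch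
              exact (List.isChain_cons_cons.1 hLch).1
            exact ⟨fun hcl => absurd hcl.2 (not_headAt_of_dir hdir1), fun _ => hvaS⟩
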